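/- Let u, v, w be smooth on ℝ² × [0,H], L-periodic in x and y, with u_z = v_z = 0 and w = 0 at z = 0 and z = H, and let ε > 0 satisfy ε w_z = −(u_x + v_y) everywhere. Set ω₃ = v_x − u_y and ζ = (−v_z, u_z, ω₃). Then ∫_Ω |curl ζ|² dV = ∫_Ω (|∇₂ω₃|² + 2|ω_{3,z}|²) dV + ∫_Ω (u_{zz}² + v_{zz}² + ε² w_{zz}²) dV. -/

import Mathlib

open MeasureTheory Real

noncomputable section

/-- Partial derivative in the first (x) variable. -/
def pX (f : ℝ → ℝ → ℝ → ℝ) : ℝ → ℝ → ℝ → ℝ := fun x y z => deriv (fun s => f s y z) x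
/-- Partial derivative in the second (y) variable. -/
def pY (f : ℝ → ℝ → ℝ → ℝ) : ℝ → ℝ → ℝ → ℝ := fun x y z => deriv (fun s => f x s z) y
/-- Partial derivative in the third (z) variable. -/
def pZ (f : ℝ → ℝ → ℝ → ℝ) : ℝ → ℝ → ℝ → ℝ := fun x y z => deriv (fun s => f x y s) z

/-- The cylinder Ω = [0,L] × [0,L] × [0,H]. -/
def Omega (L H : ℝ) : Set (ℝ × ℝ × ℝ) := Set.Icc 0 L ×ˢ Set.Icc 0 L ×ˢ Set.Icc 0 H

/-- Smoothness (C^∞) of a scalar field on ℝ³. -/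
def Smooth3 (f : ℝ → ℝ → ℝ → ℝ) : Prop := ContDiff ℝ (⊤ : ℕ∞) (fun p : ℝ × ℝ × ℝ => f p.1 p.2.1 p.2.2)

/-- L-periodicity in the horizontal variables x and y. -/
def PerXY (L : ℝ) (f : ℝ → ℝ → ℝ → ℝ) : Prop :=
  ∀ x y z : ℝ, f (x + L) y z = f x y z ∧ f x (y + L) z = f x y z

/-- First component of the curl of the vector field (f, g, h). -/
def curl1 (f g h : ℝ → ℝ → ℝ → ℝ) : ℝ → ℝ → ℝ → ℝ := fun x y z => pY h x y z - pZ g x y z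
/-- Second component of the curl of the vector field (f, g, h). -/
def curl2 (f g h : ℝ → ℝ → ℝ → ℝ) : ℝ → ℝ → ℝ → ℝ := fun x y z => pZ f x y z - pX h x y z
/-- Third component of the curl of the vector field (f, g, h). -/
def curl3 (f g h : ℝ → ℝ → ℝ → ℝ) : ℝ → ℝ → ℝ → ℝ := fun x y z => pX g x y z - pY f x y z

/-- ω₃ = v_x − u_y. -/
def om (u v : ℝ → ℝ → ℝ → ℝ) : ℝ → ℝ → ℝ → ℝ := fun x y z => pX v x y z - pY u x y z

namespace Aux

abbrev unc (f : ℝ → ℝ → ℝ → ℝ) : ℝ × ℝ × ℝ → ℝ := fun p => f p.1 p.2.1 p.2.2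

lemma lineX (y z : ℝ) : HasDerivAt (fun s : ℝ => ((s, y, z) : ℝ × ℝ × ℝ)) (1, 0, 0) x :=
  (hasDerivAt_id x).prodMk ((hasDerivAt_const x y).prodMk (hasDerivAt_const x z))

lemma lineY (x z : ℝ) : HasDerivAt (fun s : ℝ => ((x, s, z) : ℝ × ℝ × ℝ)) (0, 1, 0) y :=
  (hasDerivAt_const y x).prodMk ((hasDerivAt_id y).prodMk (hasDerivAt_const y z))

lemma lineZ (x y : ℝ) : HasDerivAt (fun s : ℝ => ((x, y, s) : ℝ × ℝ × ℝ)) (0, 0, 1) z :=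
  (hasDerivAt_const z x).prodMk ((hasDerivAt_const z y).prodMk (hasDerivAt_id z))

variable {f : ℝ → ℝ → ℝ → ℝ}

lemma hasDerivX (hf : Smooth3 f) (x y z : ℝ) :
    HasDerivAt (fun s => f s y z) (fderiv ℝ (unc f) (x, y, z) (1, 0, 0)) x := by
  have h1 : HasFDerivAt (unc f) (fderiv ℝ (unc f) (x, y, z)) (x, y, z) :=
    (hf.differentiable (by simp) (x, y, z)).hasFDerivAt
  exact h1.comp_hasDerivAt x (lineX y z)

lemma hasDerivY (hf : Smooth3 f) (x y z : ℝ) :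
    HasDerivAt (fun s => f x s z) (fderiv ℝ (unc f) (x, y, z) (0, 1, 0)) y := by
  have h1 : HasFDerivAt (unc f) (fderiv ℝ (unc f) (x, y, z)) (x, y, z) :=
    (hf.differentiable (by simp) (x, y, z)).hasFDerivAt
  exact h1.comp_hasDerivAt y (lineY x z)

lemma hasDerivZ (hf : Smooth3 f) (x y z : ℝ) :
    HasDerivAt (fun s => f x y s) (fderiv ℝ (unc f) (x, y, z) (0, 0, 1)) z := by
  have h1 : HasFDerivAt (unc f) (fderiv ℝ (unc f) (x, y, z)) (x, y, z) :=
    (hf.differentiable (by simp) (x, y, z)).hasFDerivAt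
  exact h1.comp_hasDerivAt z (lineZ x y)

lemma pX_eq (hf : Smooth3 f) (x y z : ℝ) :
    pX f x y z = fderiv ℝ (unc f) (x, y, z) (1, 0, 0) := (hasDerivX hf x y z).deriv

lemma pY_eq (hf : Smooth3 f) (x y z : ℝ) :
    pY f x y z = fderiv ℝ (unc f) (x, y, z) (0, 1, 0) := (hasDerivY hf x y z).deriv

lemma pZ_eq (hf : Smooth3 f) (x y z : ℝ) :
    pZ f x y z = fderiv ℝ (unc f) (x, y, z) (0, 0, 1) := (hasDerivZ hf x y z).deriv

lemma smooth_fderiv_apply (hf : Smooth3 f) (v : ℝ × ℝ × ℝ) :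
    ContDiff ℝ (⊤ : ℕ∞) (fun p : ℝ × ℝ × ℝ => fderiv ℝ (unc f) p v) :=
  (hf.fderiv_right (by simp)).clm_apply contDiff_const

lemma smooth_pX (hf : Smooth3 f) : Smooth3 (pX f) := by
  have := smooth_fderiv_apply hf (1, 0, 0)
  have he : (fun p : ℝ × ℝ × ℝ => pX f p.1 p.2.1 p.2.2)
      = fun p : ℝ × ℝ × ℝ => fderiv ℝ (unc f) p (1, 0, 0) := by
    funext p; exact pX_eq hf p.1 p.2.1 p.2.2
  rw [Smooth3, he]; exact this


lemma smooth_pY (hf : Smooth3 f) : Smooth3 (pY f) := by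
  have := smooth_fderiv_apply hf (0, 1, 0)
  have he : (fun p : ℝ × ℝ × ℝ => pY f p.1 p.2.1 p.2.2)
      = fun p : ℝ × ℝ × ℝ => fderiv ℝ (unc f) p (0, 1, 0) := by
    funext p; exact pY_eq hf p.1 p.2.1 p.2.2
  rw [Smooth3, he]; exact this

lemma smooth_pZ (hf : Smooth3 f) : Smooth3 (pZ f) := by
  have := smooth_fderiv_apply hf (0, 0, 1)
  have he : (fun p : ℝ × ℝ × ℝ => pZ f p.1 p.2.1 p.2.2)
      = fun p : ℝ × ℝ × ℝ => fderiv ℝ (unc f) p (0, 0, 1) := by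
    funext p; exact pZ_eq hf p.1 p.2.1 p.2.2
  rw [Smooth3, he]; exact this

/-- directional second derivative representation -/
lemma fderiv_apply_line (hf : Smooth3 f) (v : ℝ × ℝ × ℝ) {p : ℝ × ℝ × ℝ}
    (γ : ℝ → ℝ × ℝ × ℝ) (t : ℝ) (d : ℝ × ℝ × ℝ) (hγ : HasDerivAt γ d t) (hγt : γ t = p) :
    HasDerivAt (fun s => fderiv ℝ (unc f) (γ s) v)
      (fderiv ℝ (fderiv ℝ (unc f)) p d v) t := by
  subst hγt
  have hdf : DifferentiableAt ℝ (fderiv ℝ (unc f)) (γ t) :=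
    ((hf.fderiv_right (m := (⊤ : ℕ∞)) (by simp)).differentiable (by simp) (γ t))
  have h1 : HasFDerivAt (fun q => fderiv ℝ (unc f) q v)
      ((ContinuousLinearMap.apply ℝ ℝ v).comp (fderiv ℝ (fderiv ℝ (unc f)) (γ t))) (γ t) :=
    (ContinuousLinearMap.apply ℝ ℝ v).hasFDerivAt.comp (γ t) hdf.hasFDerivAt
  have := h1.comp_hasDerivAt t hγ
  simp at this
  exact this

lemma symm2 (hf : Smooth3 f) (p v w : ℝ × ℝ × ℝ) :
    fderiv ℝ (fderiv ℝ (unc f)) p v w = fderiv ℝ (fderiv ℝ (unc f)) p w v :=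
  (hf.contDiffAt.isSymmSndFDerivAt (by simp [minSmoothness_of_isRCLikeNormedField]; exact WithTop.coe_le_coe.2 le_top)) v w

lemma pX_pZ_comm (hf : Smooth3 f) (x y z : ℝ) :
    pX (pZ f) x y z = pZ (pX f) x y z := by
  have h1 : pX (pZ f) x y z
      = fderiv ℝ (fderiv ℝ (unc f)) (x, y, z) (1,0,0) (0,0,1) := by
    have : (fun s => pZ f s y z) = fun s => fderiv ℝ (unc f) (s, y, z) (0,0,1) := by
      funext s; exact pZ_eq hf s y z
    rw [pX, this]
    exact (fderiv_apply_line hf (0,0,1) (p := (x,y,z)) _ x (1,0,0) (lineX y z) rfl).deriv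
  have h2 : pZ (pX f) x y z
      = fderiv ℝ (fderiv ℝ (unc f)) (x, y, z) (0,0,1) (1,0,0) := by
    have : (fun s => pX f x y s) = fun s => fderiv ℝ (unc f) (x, y, s) (1,0,0) := by
      funext s; exact pX_eq hf x y s
    rw [pZ, this]
    exact (fderiv_apply_line hf (1,0,0) (p := (x,y,z)) _ z (0,0,1) (lineZ x y) rfl).deriv
  rw [h1, h2, symm2 hf]

lemma pY_pZ_comm (hf : Smooth3 f) (x y z : ℝ) :
    pY (pZ f) x y z = pZ (pY f) x y z := by
  have h1 : pY (pZ f) x y z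
      = fderiv ℝ (fderiv ℝ (unc f)) (x, y, z) (0,1,0) (0,0,1) := by
    have : (fun s => pZ f x s z) = fun s => fderiv ℝ (unc f) (x, s, z) (0,0,1) := by
      funext s; exact pZ_eq hf x s z
    rw [pY, this]
    exact (fderiv_apply_line hf (0,0,1) (p := (x,y,z)) _ y (0,1,0) (lineY x z) rfl).deriv
  have h2 : pZ (pY f) x y z
      = fderiv ℝ (fderiv ℝ (unc f)) (x, y, z) (0,0,1) (0,1,0) := by
    have : (fun s => pY f x y s) = fun s => fderiv ℝ (unc f) (x, y, s) (0,1,0) := by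
      funext s; exact pY_eq hf x y s
    rw [pZ, this]
    exact (fderiv_apply_line hf (0,1,0) (p := (x,y,z)) _ z (0,0,1) (lineZ x y) rfl).deriv
  rw [h1, h2, symm2 hf]



lemma cont_unc (hf : Smooth3 f) : Continuous (unc f) := hf.continuous

lemma isCompact_Omega (L H : ℝ) : IsCompact (Omega L H) :=
  isCompact_Icc.prod (isCompact_Icc.prod isCompact_Icc)

lemma integrableOn_Omega (hf : Smooth3 f) (L H : ℝ) :
    IntegrableOn (unc f) (Omega L H) :=
  (cont_unc hf).continuousOn.integrableOn_compact (isCompact_Omega L H)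

/-- Fubini on a product set for the standard volume. -/
lemma set_fub (g : ℝ → ℝ × ℝ → ℝ) {s : Set ℝ} {t : Set (ℝ × ℝ)}
    (hg : IntegrableOn (fun q : ℝ × (ℝ × ℝ) => g q.1 q.2) (s ×ˢ t)) :
    ∫ p in s ×ˢ t, g p.1 p.2 = ∫ a in s, ∫ b in t, g a b := by
  rw [MeasureTheory.Measure.volume_eq_prod] at hg ⊢
  exact setIntegral_prod _ hg

lemma set_fub2 (g : ℝ → ℝ → ℝ) {s t : Set ℝ}
    (hg : IntegrableOn (fun q : ℝ × ℝ => g q.1 q.2) (s ×ˢ t)) :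
    ∫ p in s ×ˢ t, g p.1 p.2 = ∫ a in s, ∫ b in t, g a b := by
  rw [MeasureTheory.Measure.volume_eq_prod] at hg ⊢
  exact setIntegral_prod _ hg

lemma set_swap {β : Type} [MeasureSpace β] [SigmaFinite (volume : Measure β)]
    (g : ℝ → β → ℝ) {s : Set ℝ} {t : Set β}
    (hg : IntegrableOn (fun q : ℝ × β => g q.1 q.2) (s ×ˢ t)) :
    ∫ a in s, ∫ b in t, g a b = ∫ b in t, ∫ a in s, g a b := by
  apply integral_integral_swap
  rw [Measure.prod_restrict, ← MeasureTheory.Measure.volume_eq_prod]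
  exact hg

/-- FTC for 1D over Icc. -/
lemma key1 {g : ℝ → ℝ} (hg : Differentiable ℝ g) (hc : Continuous (deriv g))
    {a b : ℝ} (hab : a ≤ b) : ∫ x in Set.Icc a b, deriv g x = g b - g a := by
  rw [MeasureTheory.integral_Icc_eq_integral_Ioc, ← intervalIntegral.integral_of_le hab]
  exact intervalIntegral.integral_deriv_eq_sub (fun x _ => hg x)
    (hc.intervalIntegrable a b)



variable {L H : ℝ}

lemma contX (hf : Smooth3 f) (y z : ℝ) : Continuous (fun x => f x y z) := by
  have h : Continuous fun x : ℝ => ((x, y, z) : ℝ × ℝ × ℝ) := by continuity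
  exact (cont_unc hf).comp h

lemma diffX (hf : Smooth3 f) (y z : ℝ) : Differentiable ℝ (fun x => f x y z) :=
  fun x => (hasDerivX hf x y z).differentiableAt

lemma diffY (hf : Smooth3 f) (x z : ℝ) : Differentiable ℝ (fun y => f x y z) :=
  fun y => (hasDerivY hf x y z).differentiableAt

lemma diffZ (hf : Smooth3 f) (x y : ℝ) : Differentiable ℝ (fun z => f x y z) :=
  fun z => (hasDerivZ hf x y z).differentiableAt

lemma int2 (hf : Smooth3 f) (x : ℝ) (s t : Set ℝ) (hs : IsCompact s) (ht : IsCompact t) :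
    IntegrableOn (fun q : ℝ × ℝ => f x q.1 q.2) (s ×ˢ t) := by
  have h : Continuous fun q : ℝ × ℝ => ((x, q.1, q.2) : ℝ × ℝ × ℝ) := by continuity
  have : Continuous (fun q : ℝ × ℝ => f x q.1 q.2) := (cont_unc hf).comp h
  exact this.continuousOn.integrableOn_compact (hs.prod ht)

set_option maxHeartbeats 1000000 in
lemma zeroX (hL : 0 < L) (hf : Smooth3 f) (hper : ∀ x y z : ℝ, f (x + L) y z = f x y z) :
    ∫ p in Omega L H, pX f p.1 p.2.1 p.2.2 = 0 := by
  have hint := integrableOn_Omega (smooth_pX hf) (L := L) (H := H)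
  rw [Omega] at hint ⊢
  rw [set_fub (fun x q => pX f x q.1 q.2) hint, set_swap (fun x (q : ℝ × ℝ) => pX f x q.1 q.2) hint]
  have inner : ∀ q : ℝ × ℝ, ∫ x in Set.Icc 0 L, pX f x q.1 q.2 = 0 := by
    intro q
    have h2 : Continuous (deriv (fun s => f s q.1 q.2)) := contX (smooth_pX hf) q.1 q.2
    calc (∫ x in Set.Icc 0 L, pX f x q.1 q.2)
        = ∫ x in Set.Icc 0 L, deriv (fun s => f s q.1 q.2) x := rfl
      _ = f L q.1 q.2 - f 0 q.1 q.2 := key1 (diffX hf q.1 q.2) h2 hL.le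
      _ = 0 := by rw [show (L:ℝ) = 0 + L by ring, hper]; ring
  simp only [inner, integral_zero]

lemma zeroY (hL : 0 < L) (hf : Smooth3 f) (hper : ∀ x y z : ℝ, f x (y + L) z = f x y z) :
    ∫ p in Omega L H, pY f p.1 p.2.1 p.2.2 = 0 := by
  have hint := integrableOn_Omega (smooth_pY hf) (L := L) (H := H)
  rw [Omega] at hint ⊢
  rw [set_fub (fun x q => pY f x q.1 q.2) hint]
  have outer : ∀ x : ℝ, (∫ q in Set.Icc (0:ℝ) L ×ˢ Set.Icc (0:ℝ) H, pY f x q.1 q.2) = 0 := by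
    intro x
    have hint2 := int2 (smooth_pY hf) x (Set.Icc 0 L) (Set.Icc 0 H) isCompact_Icc isCompact_Icc
    rw [set_fub2 _ hint2, set_swap (fun a b => pY f x a b) hint2]
    have inner : ∀ z : ℝ, ∫ y in Set.Icc 0 L, pY f x y z = 0 := by
      intro z
      have h : Continuous fun y : ℝ => ((x, y, z) : ℝ × ℝ × ℝ) := by continuity
      have h2 : Continuous (deriv (fun s => f x s z)) := (cont_unc (smooth_pY hf)).comp h
      calc (∫ y in Set.Icc 0 L, pY f x y z)
          = ∫ y in Set.Icc 0 L, deriv (fun s => f x s z) y := rfl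
        _ = f x L z - f x 0 z := key1 (diffY hf x z) h2 hL.le
        _ = 0 := by rw [show (L:ℝ) = 0 + L by ring, hper]; ring
    simp only [inner, integral_zero]
  simp only [outer, integral_zero]

lemma zeroZ (hH : 0 < H) (hf : Smooth3 f)
    (h0 : ∀ x y : ℝ, f x y 0 = 0) (hHb : ∀ x y : ℝ, f x y H = 0) :
    ∫ p in Omega L H, pZ f p.1 p.2.1 p.2.2 = 0 := by
  have hint := integrableOn_Omega (smooth_pZ hf) (L := L) (H := H)
  rw [Omega] at hint ⊢
  rw [set_fub (fun x q => pZ f x q.1 q.2) hint]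
  have outer : ∀ x : ℝ, (∫ q in Set.Icc (0:ℝ) L ×ˢ Set.Icc (0:ℝ) H, pZ f x q.1 q.2) = 0 := by
    intro x
    have hint2 := int2 (smooth_pZ hf) x (Set.Icc 0 L) (Set.Icc 0 H) isCompact_Icc isCompact_Icc
    rw [set_fub2 _ hint2]
    have inner : ∀ y : ℝ, ∫ z in Set.Icc 0 H, pZ f x y z = 0 := by
      intro y
      have h : Continuous fun z : ℝ => ((x, y, z) : ℝ × ℝ × ℝ) := by continuity
      have h2 : Continuous (deriv (fun s => f x y s)) := (cont_unc (smooth_pZ hf)).comp h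
      calc (∫ z in Set.Icc 0 H, pZ f x y z)
          = ∫ z in Set.Icc 0 H, deriv (fun s => f x y s) z := rfl
        _ = f x y H - f x y 0 := key1 (diffZ hf x y) h2 hH.le
        _ = 0 := by rw [h0, hHb]; ring
    simp only [inner, integral_zero]
  simp only [outer, integral_zero]


variable {g : ℝ → ℝ → ℝ → ℝ}

lemma smooth_mul (hf : Smooth3 f) (hg : Smooth3 g) :
    Smooth3 (fun a b c => f a b c * g a b c) := hf.mul hg

lemma smooth_sub (hf : Smooth3 f) (hg : Smooth3 g) :
    Smooth3 (fun a b c => f a b c - g a b c) := hf.sub hg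

lemma pX_mul (hf : Smooth3 f) (hg : Smooth3 g) (x y z : ℝ) :
    pX (fun a b c => f a b c * g a b c) x y z
      = pX f x y z * g x y z + f x y z * pX g x y z :=
  deriv_mul (diffX hf y z x) (diffX hg y z x)

lemma pY_mul (hf : Smooth3 f) (hg : Smooth3 g) (x y z : ℝ) :
    pY (fun a b c => f a b c * g a b c) x y z
      = pY f x y z * g x y z + f x y z * pY g x y z :=
  deriv_mul (diffY hf x z y) (diffY hg x z y)

lemma pZ_mul (hf : Smooth3 f) (hg : Smooth3 g) (x y z : ℝ) :
    pZ (fun a b c => f a b c * g a b c) x y z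
      = pZ f x y z * g x y z + f x y z * pZ g x y z :=
  deriv_mul (diffZ hf x y z) (diffZ hg x y z)

lemma pZ_sub (hf : Smooth3 f) (hg : Smooth3 g) (x y z : ℝ) :
    pZ (fun a b c => f a b c - g a b c) x y z = pZ f x y z - pZ g x y z :=
  deriv_sub (diffZ hf x y z) (diffZ hg x y z)

lemma pZ_neg (x y z : ℝ) :
    pZ (fun a b c => -f a b c) x y z = -pZ f x y z := by
  simp [pZ, deriv.neg]

lemma pY_neg (x y z : ℝ) :
    pY (fun a b c => -f a b c) x y z = -pY f x y z := by
  simp [pY, deriv.neg]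

/-- periodicity preserved by partial derivatives -/
lemma per_pX (hper : PerXY L f) : PerXY L (pX f) := by
  intro x y z
  constructor
  · show deriv (fun s => f s y z) (x + L) = deriv (fun s => f s y z) x
    rw [← deriv_comp_add_const (fun s => f s y z) L]
    congr 1
    funext s
    exact (hper s y z).1
  · show deriv (fun s => f s (y + L) z) x = deriv (fun s => f s y z) x
    congr 1
    funext s
    exact (hper s y z).2

lemma per_pY (hper : PerXY L f) : PerXY L (pY f) := by
  intro x y z
  constructor
  · show deriv (fun s => f (x + L) s z) y = deriv (fun s => f x s z) y
    congr 1
    funext s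
    exact (hper x s z).1
  · show deriv (fun s => f x s z) (y + L) = deriv (fun s => f x s z) y
    rw [← deriv_comp_add_const (fun s => f x s z) L]
    congr 1
    funext s
    exact (hper x s z).2

lemma per_pZ (hper : PerXY L f) : PerXY L (pZ f) := by
  intro x y z
  constructor
  · show deriv (fun s => f (x + L) y s) z = deriv (fun s => f x y s) z
    congr 1
    funext s
    exact (hper x y s).1
  · show deriv (fun s => f x (y + L) s) z = deriv (fun s => f x y s) z
    congr 1
    funext s
    exact (hper x y s).2

lemma per_mul (hf : PerXY L f) (hg : PerXY L g) :
    PerXY L (fun a b c => f a b c * g a b c) := by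
  intro x y z
  exact ⟨by simp only [(hf x y z).1, (hg x y z).1], by simp only [(hf x y z).2, (hg x y z).2]⟩

lemma per_sub (hf : PerXY L f) (hg : PerXY L g) :
    PerXY L (fun a b c => f a b c - g a b c) := by
  intro x y z
  exact ⟨by simp only [(hf x y z).1, (hg x y z).1], by simp only [(hf x y z).2, (hg x y z).2]⟩

end Aux


open Aux in
/-- Identity (lempr6): ∫|curl ζ|² = ∫(|∇₂ω₃|² + 2|ω₃,z|²) + ∫(u_zz² + v_zz² + ε²w_zz²). -/
theorem lempr6 (L H : ℝ) (hL : 0 < L) (hH : 0 < H) (ε : ℝ) (hε : 0 < ε)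
    (u v w : ℝ → ℝ → ℝ → ℝ)
    (hu : Smooth3 u) (hv : Smooth3 v) (hw : Smooth3 w)
    (hup : PerXY L u) (hvp : PerXY L v) (hwp : PerXY L w)
    (hbc : ∀ x y : ℝ, pZ u x y 0 = 0 ∧ pZ u x y H = 0 ∧ pZ v x y 0 = 0 ∧ pZ v x y H = 0
        ∧ w x y 0 = 0 ∧ w x y H = 0)
    (hdiv : ∀ x y z : ℝ, ε * pZ w x y z = -(pX u x y z + pY v x y z)) :
    (∫ p in Omega L H,
        (curl1 (fun a b c => -(pZ v a b c)) (pZ u) (om u v) p.1 p.2.1 p.2.2)^2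
        + (curl2 (fun a b c => -(pZ v a b c)) (pZ u) (om u v) p.1 p.2.1 p.2.2)^2
        + (curl3 (fun a b c => -(pZ v a b c)) (pZ u) (om u v) p.1 p.2.1 p.2.2)^2)
      = (∫ p in Omega L H,
          ((pX (om u v) p.1 p.2.1 p.2.2)^2 + (pY (om u v) p.1 p.2.1 p.2.2)^2)
          + 2 * (pZ (om u v) p.1 p.2.1 p.2.2)^2)
        + ∫ p in Omega L H, (pZ (pZ u) p.1 p.2.1 p.2.2)^2 + (pZ (pZ v) p.1 p.2.1 p.2.2)^2
            + ε^2 * (pZ (pZ w) p.1 p.2.1 p.2.2)^2 := by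
  have hω : Smooth3 (om u v) := smooth_sub (smooth_pX hv) (smooth_pY hu)
  -- the three flux functions
  set g1 : ℝ → ℝ → ℝ → ℝ := fun a b c => pZ v a b c * pZ (om u v) a b c with hg1def
  set g2 : ℝ → ℝ → ℝ → ℝ := fun a b c => pZ u a b c * pZ (om u v) a b c with hg2def
  set g3 : ℝ → ℝ → ℝ → ℝ :=
    fun a b c => pZ v a b c * pX (om u v) a b c - pZ u a b c * pY (om u v) a b c with hg3def
  have hsg1 : Smooth3 g1 := smooth_mul (smooth_pZ hv) (smooth_pZ hω)
  have hsg2 : Smooth3 g2 := smooth_mul (smooth_pZ hu) (smooth_pZ hω)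
  have hsg3 : Smooth3 g3 :=
    smooth_sub (smooth_mul (smooth_pZ hv) (smooth_pX hω))
      (smooth_mul (smooth_pZ hu) (smooth_pY hω))
  -- pointwise identity
  have key : ∀ x y z : ℝ,
      (curl1 (fun a b c => -(pZ v a b c)) (pZ u) (om u v) x y z)^2
        + (curl2 (fun a b c => -(pZ v a b c)) (pZ u) (om u v) x y z)^2
        + (curl3 (fun a b c => -(pZ v a b c)) (pZ u) (om u v) x y z)^2
      = (((pX (om u v) x y z)^2 + (pY (om u v) x y z)^2) + 2 * (pZ (om u v) x y z)^2
          + ((pZ (pZ u) x y z)^2 + (pZ (pZ v) x y z)^2 + ε^2 * (pZ (pZ w) x y z)^2))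
        + 2 * (pZ g3 x y z - pX g1 x y z + pY g2 x y z) := by
    intro x y z
    have e1 : curl1 (fun a b c => -(pZ v a b c)) (pZ u) (om u v) x y z
        = pY (om u v) x y z - pZ (pZ u) x y z := rfl
    have e2 : curl2 (fun a b c => -(pZ v a b c)) (pZ u) (om u v) x y z
        = -pZ (pZ v) x y z - pX (om u v) x y z := by
      show pZ (fun a b c => -(pZ v a b c)) x y z - pX (om u v) x y z = _
      rw [pZ_neg]
    have e3 : curl3 (fun a b c => -(pZ v a b c)) (pZ u) (om u v) x y z
        = pX (pZ u) x y z + pY (pZ v) x y z := by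
      show pX (pZ u) x y z - pY (fun a b c => -(pZ v a b c)) x y z = _
      rw [pY_neg]; ring
    have hw2 : pX (pZ u) x y z + pY (pZ v) x y z = -(ε * pZ (pZ w) x y z) := by
      have d1 := hasDerivZ (smooth_pZ hw) x y z
      rw [← pZ_eq (smooth_pZ hw) x y z] at d1
      have d2 := hasDerivZ (smooth_pX hu) x y z
      rw [← pZ_eq (smooth_pX hu) x y z] at d2
      have d3 := hasDerivZ (smooth_pY hv) x y z
      rw [← pZ_eq (smooth_pY hv) x y z] at d3
      have hLd : HasDerivAt (fun s => ε * pZ w x y s) (ε * pZ (pZ w) x y z) z :=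
        d1.const_mul ε
      have hRd : HasDerivAt (fun s => -(pX u x y s + pY v x y s))
          (-(pZ (pX u) x y z + pZ (pY v) x y z)) z := (d2.add d3).neg
      have hfun : (fun s => ε * pZ w x y s) = fun s => -(pX u x y s + pY v x y s) := by
        funext s; exact hdiv x y s
      rw [hfun] at hLd
      have huni := hLd.unique hRd
      rw [← pX_pZ_comm hu x y z, ← pY_pZ_comm hv x y z] at huni
      linarith [huni]
    have ec : pZ (om u v) x y z = pZ (pX v) x y z - pZ (pY u) x y z :=
      pZ_sub (smooth_pX hv) (smooth_pY hu) x y z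
    have eG1 : pX g1 x y z
        = pZ (pX v) x y z * pZ (om u v) x y z
          + pZ v x y z * pZ (pX (om u v)) x y z := by
      rw [hg1def, pX_mul (smooth_pZ hv) (smooth_pZ hω) x y z,
        pX_pZ_comm hv, pX_pZ_comm hω]
    have eG2 : pY g2 x y z
        = pZ (pY u) x y z * pZ (om u v) x y z
          + pZ u x y z * pZ (pY (om u v)) x y z := by
      rw [hg2def, pY_mul (smooth_pZ hu) (smooth_pZ hω) x y z,
        pY_pZ_comm hu, pY_pZ_comm hω]
    have eG3 : pZ g3 x y z
        = (pZ (pZ v) x y z * pX (om u v) x y z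
            + pZ v x y z * pZ (pX (om u v)) x y z)
          - (pZ (pZ u) x y z * pY (om u v) x y z
            + pZ u x y z * pZ (pY (om u v)) x y z) := by
      rw [hg3def,
        pZ_sub (smooth_mul (smooth_pZ hv) (smooth_pX hω))
          (smooth_mul (smooth_pZ hu) (smooth_pY hω)) x y z,
        pZ_mul (smooth_pZ hv) (smooth_pX hω) x y z,
        pZ_mul (smooth_pZ hu) (smooth_pY hω) x y z]
    rw [e1, e2, e3, hw2, eG1, eG2, eG3, ec]
    ring
  -- measurability of the domain
  have hmeas : MeasurableSet (Omega L H) :=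
    (measurableSet_Icc.prod (measurableSet_Icc.prod measurableSet_Icc))
  -- smoothness/integrability of the pieces
  have hsB : Smooth3 (fun a b c =>
      ((pX (om u v) a b c)^2 + (pY (om u v) a b c)^2) + 2 * (pZ (om u v) a b c)^2) :=
    (((smooth_pX hω).pow 2).add ((smooth_pY hω).pow 2)).add
      (contDiff_const.mul ((smooth_pZ hω).pow 2))
  have hsC : Smooth3 (fun a b c =>
      (pZ (pZ u) a b c)^2 + (pZ (pZ v) a b c)^2 + ε^2 * (pZ (pZ w) a b c)^2) :=
    (((smooth_pZ (smooth_pZ hu)).pow 2).add ((smooth_pZ (smooth_pZ hv)).pow 2)).add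
      (contDiff_const.mul ((smooth_pZ (smooth_pZ hw)).pow 2))
  have hsD : Smooth3 (fun a b c => pZ g3 a b c - pX g1 a b c + pY g2 a b c) :=
    ((smooth_pZ hsg3).sub (smooth_pX hsg1)).add (smooth_pY hsg2)
  have iB : IntegrableOn (fun p : ℝ × ℝ × ℝ =>
      ((pX (om u v) p.1 p.2.1 p.2.2)^2 + (pY (om u v) p.1 p.2.1 p.2.2)^2)
        + 2 * (pZ (om u v) p.1 p.2.1 p.2.2)^2) (Omega L H) :=
    integrableOn_Omega hsB (L := L) (H := H)
  have iC : IntegrableOn (fun p : ℝ × ℝ × ℝ =>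
      (pZ (pZ u) p.1 p.2.1 p.2.2)^2 + (pZ (pZ v) p.1 p.2.1 p.2.2)^2
        + ε^2 * (pZ (pZ w) p.1 p.2.1 p.2.2)^2) (Omega L H) :=
    integrableOn_Omega hsC (L := L) (H := H)
  have iD : IntegrableOn (fun p : ℝ × ℝ × ℝ =>
      pZ g3 p.1 p.2.1 p.2.2 - pX g1 p.1 p.2.1 p.2.2 + pY g2 p.1 p.2.1 p.2.2) (Omega L H) :=
    integrableOn_Omega hsD (L := L) (H := H)
  have iZ3 : IntegrableOn (fun p : ℝ × ℝ × ℝ => pZ g3 p.1 p.2.1 p.2.2) (Omega L H) :=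
    integrableOn_Omega (smooth_pZ hsg3) (L := L) (H := H)
  have iX1 : IntegrableOn (fun p : ℝ × ℝ × ℝ => pX g1 p.1 p.2.1 p.2.2) (Omega L H) :=
    integrableOn_Omega (smooth_pX hsg1) (L := L) (H := H)
  have iY2 : IntegrableOn (fun p : ℝ × ℝ × ℝ => pY g2 p.1 p.2.1 p.2.2) (Omega L H) :=
    integrableOn_Omega (smooth_pY hsg2) (L := L) (H := H)
  have iZX : IntegrableOn (fun p : ℝ × ℝ × ℝ =>
      pZ g3 p.1 p.2.1 p.2.2 - pX g1 p.1 p.2.1 p.2.2) (Omega L H) := iZ3.sub iX1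
  have iBC : IntegrableOn (fun p : ℝ × ℝ × ℝ =>
      (((pX (om u v) p.1 p.2.1 p.2.2)^2 + (pY (om u v) p.1 p.2.1 p.2.2)^2)
        + 2 * (pZ (om u v) p.1 p.2.1 p.2.2)^2)
      + ((pZ (pZ u) p.1 p.2.1 p.2.2)^2 + (pZ (pZ v) p.1 p.2.1 p.2.2)^2
        + ε^2 * (pZ (pZ w) p.1 p.2.1 p.2.2)^2)) (Omega L H) := iB.add iC
  have iD2 : IntegrableOn (fun p : ℝ × ℝ × ℝ =>
      2 * (pZ g3 p.1 p.2.1 p.2.2 - pX g1 p.1 p.2.1 p.2.2 + pY g2 p.1 p.2.1 p.2.2))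
      (Omega L H) := iD.const_mul 2
  -- the divergence integral vanishes
  have hωper : PerXY L (om u v) := per_sub (per_pX hvp) (per_pY hup)
  have perg1 : PerXY L g1 := per_mul (per_pZ hvp) (per_pZ hωper)
  have perg2 : PerXY L g2 := per_mul (per_pZ hup) (per_pZ hωper)
  have hZ3 : ∫ p in Omega L H, pZ g3 p.1 p.2.1 p.2.2 = 0 := by
    refine zeroZ hH hsg3 ?_ ?_
    · intro x y; rw [hg3def]
      simp only [(hbc x y).1, (hbc x y).2.2.1, zero_mul, sub_zero, mul_zero]
    · intro x y; rw [hg3def]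
      simp only [(hbc x y).2.1, (hbc x y).2.2.2.1, zero_mul, sub_zero, mul_zero]
  have hX1 : ∫ p in Omega L H, pX g1 p.1 p.2.1 p.2.2 = 0 :=
    zeroX hL hsg1 (fun x y z => (perg1 x y z).1)
  have hY2 : ∫ p in Omega L H, pY g2 p.1 p.2.1 p.2.2 = 0 :=
    zeroY hL hsg2 (fun x y z => (perg2 x y z).2)
  have hDzero : ∫ p in Omega L H,
      (pZ g3 p.1 p.2.1 p.2.2 - pX g1 p.1 p.2.1 p.2.2 + pY g2 p.1 p.2.1 p.2.2) = 0 := by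
    rw [integral_add iZX iY2, integral_sub iZ3 iX1, hZ3, hX1, hY2]
    ring
  calc (∫ p in Omega L H,
        (curl1 (fun a b c => -(pZ v a b c)) (pZ u) (om u v) p.1 p.2.1 p.2.2)^2
        + (curl2 (fun a b c => -(pZ v a b c)) (pZ u) (om u v) p.1 p.2.1 p.2.2)^2
        + (curl3 (fun a b c => -(pZ v a b c)) (pZ u) (om u v) p.1 p.2.1 p.2.2)^2)
      = ∫ p in Omega L H,
          ((((pX (om u v) p.1 p.2.1 p.2.2)^2 + (pY (om u v) p.1 p.2.1 p.2.2)^2)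
            + 2 * (pZ (om u v) p.1 p.2.1 p.2.2)^2
            + ((pZ (pZ u) p.1 p.2.1 p.2.2)^2 + (pZ (pZ v) p.1 p.2.1 p.2.2)^2
              + ε^2 * (pZ (pZ w) p.1 p.2.1 p.2.2)^2))
          + 2 * (pZ g3 p.1 p.2.1 p.2.2 - pX g1 p.1 p.2.1 p.2.2 + pY g2 p.1 p.2.1 p.2.2)) := by
        refine setIntegral_congr_fun hmeas (fun p _ => ?_)
        exact key p.1 p.2.1 p.2.2
    _ = (∫ p in Omega L H,
          (((pX (om u v) p.1 p.2.1 p.2.2)^2 + (pY (om u v) p.1 p.2.1 p.2.2)^2)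
            + 2 * (pZ (om u v) p.1 p.2.1 p.2.2)^2
            + ((pZ (pZ u) p.1 p.2.1 p.2.2)^2 + (pZ (pZ v) p.1 p.2.1 p.2.2)^2
              + ε^2 * (pZ (pZ w) p.1 p.2.1 p.2.2)^2)))
        + ∫ p in Omega L H,
            2 * (pZ g3 p.1 p.2.1 p.2.2 - pX g1 p.1 p.2.1 p.2.2 + pY g2 p.1 p.2.1 p.2.2) := by
        exact integral_add iBC iD2
    _ = (∫ p in Omega L H,
          (((pX (om u v) p.1 p.2.1 p.2.2)^2 + (pY (om u v) p.1 p.2.1 p.2.2)^2)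
            + 2 * (pZ (om u v) p.1 p.2.1 p.2.2)^2))
        + (∫ p in Omega L H,
            ((pZ (pZ u) p.1 p.2.1 p.2.2)^2 + (pZ (pZ v) p.1 p.2.1 p.2.2)^2
              + ε^2 * (pZ (pZ w) p.1 p.2.1 p.2.2)^2))
        + 2 * ∫ p in Omega L H,
            (pZ g3 p.1 p.2.1 p.2.2 - pX g1 p.1 p.2.1 p.2.2 + pY g2 p.1 p.2.1 p.2.2) := by
        rw [integral_add iB iC, integral_const_mul]
    _ = _ := by rw [hDzero]; ring
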